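/- arXiv:1612.02464 — 3 statements merged into one kernel-verified Lean document; each statement's English description precedes it below -/
import Mathlib

section
/- Let (c_n) be a sequence of positive reals with c_n^{1/n} → μ, and suppose for constants ε ∈ (0,1), integer m ≥ 1, positive constants κ > δ > 0 and an auxiliary bound of the following form holds for all n: |T_n| · C(⌊κn⌋, ⌊δn⌋) ≤ (Σ_{i=0}^{n+⌊c·δn⌋} c_i) · Z^{δ n} for constants c ≥ 0 and Z ≥ 1. Then limsup_{n→∞} |T_n|^{1/n} ≤ μ^{1+cδ} · Z^δ · δ^δ (κ-δ)^{κ-δ} / κ^κ. -/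
/-!
Comparing the binomial expansion of `(b + c) ^ (b + c)` with its largest term, the one of index
`b`, gives `log C(b + c, b) = negMulLog b + negMulLog c - negMulLog (b + c) + O(log (b + c))`.
Since `negMulLog` is homogeneous up to a linear term, `C(⌊κn⌋, ⌊δn⌋) ^ (1/n)` tends to
`κ ^ κ / (δ ^ δ (κ - δ) ^ (κ - δ))`. A partial sum of a positive sequence of growth rate `μ ≥ 1`
has the same growth rate, so the sum up to `n + ⌊cc δ n⌋` grows like `μ ^ ((1 + cc δ) n)`.
Dividing the hypothesis by the binomial coefficient and taking `n`-th roots gives the bound.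
-/

open Real Filter Topology

namespace Nat

theorem pow_mul_pow_mul_choose_succ (b c k : ℕ) (hk : k < b + c) :
    b ^ (k + 1) * c ^ (b + c - (k + 1)) * (b + c).choose (k + 1) * ((k + 1) * c) =
      b ^ k * c ^ (b + c - k) * (b + c).choose k * ((b + c - k) * b) := by
  have hchoose := (b + c).choose_succ_right_eq k
  obtain ⟨d, hd⟩ : ∃ d, b + c - k = d + 1 := ⟨b + c - (k + 1), by omega⟩
  rw [hd] at hchoose ⊢
  rw [show b + c - (k + 1) = d by omega]
  calc _ = b ^ k * b * c ^ d * c * ((b + c).choose (k + 1) * (k + 1)) := by ring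
    _ = _ := by rw [hchoose]; ring

/-- The terms of the binomial expansion of `(b + c) ^ (b + c)` increase up to index `b` and
decrease after it. -/
theorem pow_mul_pow_mul_choose_le (b c k : ℕ) :
    b ^ k * c ^ (b + c - k) * (b + c).choose k ≤ b ^ b * c ^ c * (b + c).choose b := by
  set f : ℕ → ℕ := fun k => b ^ k * c ^ (b + c - k) * (b + c).choose k with hf
  have hstep (j : ℕ) (hj : j < b + c) : f (j + 1) * ((j + 1) * c) = f j * ((b + c - j) * b) :=
    pow_mul_pow_mul_choose_succ b c j hj
  have hfb : f b = b ^ b * c ^ c * (b + c).choose b := by simp [hf]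
  rw [← hfb]
  rcases le_total k b with hkb | hbk
  · refine monotoneOn_of_le_add_one (f := f) Set.ordConnected_Iic (fun j _ _ hj => ?_)
      hkb Set.self_mem_Iic hkb
    have hj : j < b := hj
    refine Nat.le_of_mul_le_mul_right ?_
      (Nat.mul_pos (by omega : 0 < b + c - j) (by omega : 0 < b))
    rw [← hstep j (by omega)]
    exact Nat.mul_le_mul_left _
      ((Nat.mul_le_mul (by omega : j + 1 ≤ b) (by omega : c ≤ b + c - j)).trans_eq
        (Nat.mul_comm _ _))
  · refine antitoneOn_nat_Ici_of_succ_le (f := f) (fun j hj => ?_) Set.self_mem_Ici hbk hbk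
    rcases lt_or_ge j (b + c) with hjbc | hjbc
    · refine Nat.le_of_mul_le_mul_right ?_ (Nat.mul_pos j.succ_pos (by omega : 0 < c))
      rw [hstep j hjbc]
      exact Nat.mul_le_mul_left _
        ((Nat.mul_le_mul (by omega : b + c - j ≤ c) (by omega : b ≤ j + 1)).trans_eq
          (Nat.mul_comm _ _))
    · simp [hf, Nat.choose_eq_zero_of_lt (by omega : b + c < j + 1)]

theorem pow_le_succ_mul_pow_mul_pow_mul_choose (b c : ℕ) :
    (b + c) ^ (b + c) ≤ (b + c + 1) * (b ^ b * c ^ c * (b + c).choose b) := by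
  calc (b + c) ^ (b + c)
        = ∑ k ∈ Finset.range (b + c + 1), b ^ k * c ^ (b + c - k) * (b + c).choose k :=
        add_pow b c (b + c)
    _ ≤ ∑ _k ∈ Finset.range (b + c + 1), b ^ b * c ^ c * (b + c).choose b :=
        Finset.sum_le_sum fun k _ => pow_mul_pow_mul_choose_le b c k
    _ = _ := by rw [Finset.sum_const, Finset.card_range, smul_eq_mul]

theorem pow_mul_pow_mul_choose_le_pow (b c : ℕ) :
    b ^ b * c ^ c * (b + c).choose b ≤ (b + c) ^ (b + c) := by
  calc b ^ b * c ^ c * (b + c).choose b = b ^ b * c ^ (b + c - b) * (b + c).choose b := by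
        rw [Nat.add_sub_cancel_left]
    _ ≤ ∑ k ∈ Finset.range (b + c + 1), b ^ k * c ^ (b + c - k) * (b + c).choose k :=
        Finset.single_le_sum (f := fun k => b ^ k * c ^ (b + c - k) * (b + c).choose k)
          (fun _ _ => Nat.zero_le _) (Finset.mem_range.2 (by omega))
    _ = (b + c) ^ (b + c) := (add_pow b c (b + c)).symm

end Nat

lemma natCast_pow_self_pos (n : ℕ) : (0 : ℝ) < (n : ℝ) ^ n := by
  exact_mod_cast Nat.pow_self_pos

lemma log_natCast_pow_self (n : ℕ) : log ((n : ℝ) ^ n) = -negMulLog n := by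
  rw [log_pow, negMulLog]
  ring

lemma pow_mul_pow_mul_choose_pos (b c : ℕ) :
    (0 : ℝ) < (b : ℝ) ^ b * (c : ℝ) ^ c * (b + c).choose b :=
  mul_pos (mul_pos (natCast_pow_self_pos b) (natCast_pow_self_pos c))
    (by exact_mod_cast Nat.choose_pos (by omega))

lemma log_pow_mul_pow_mul_choose (b c : ℕ) :
    log ((b : ℝ) ^ b * (c : ℝ) ^ c * (b + c).choose b) =
      log ((b + c).choose b) - negMulLog b - negMulLog c := by
  have hchoose : ((b + c).choose b : ℝ) ≠ 0 := by exact_mod_cast (Nat.choose_pos (by omega)).ne'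
  have hb := natCast_pow_self_pos b
  have hc := natCast_pow_self_pos c
  rw [log_mul (mul_pos hb hc).ne' hchoose, log_mul hb.ne' hc.ne',
    log_natCast_pow_self, log_natCast_pow_self]
  ring

theorem log_choose_add_le (b c : ℕ) :
    log ((b + c).choose b) ≤ negMulLog b + negMulLog c - negMulLog ((b : ℝ) + c) := by
  have h : (b : ℝ) ^ b * (c : ℝ) ^ c * (b + c).choose b ≤ ((b + c : ℕ) : ℝ) ^ (b + c) := by
    exact_mod_cast Nat.pow_mul_pow_mul_choose_le_pow b c
  have hlog := log_le_log (pow_mul_pow_mul_choose_pos b c) h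
  rw [log_pow_mul_pow_mul_choose, log_natCast_pow_self, Nat.cast_add] at hlog
  linarith

theorem sub_log_le_log_choose_add (b c : ℕ) :
    negMulLog b + negMulLog c - negMulLog ((b : ℝ) + c) - log ((b : ℝ) + c + 1) ≤
      log ((b + c).choose b) := by
  have h : ((b + c : ℕ) : ℝ) ^ (b + c) ≤
      ((b : ℝ) + c + 1) * ((b : ℝ) ^ b * (c : ℝ) ^ c * (b + c).choose b) := by
    exact_mod_cast Nat.pow_le_succ_mul_pow_mul_pow_mul_choose b c
  have hlog := log_le_log (natCast_pow_self_pos _) h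
  rw [log_mul (by positivity) (pow_mul_pow_mul_choose_pos b c).ne', log_pow_mul_pow_mul_choose,
    log_natCast_pow_self, Nat.cast_add] at hlog
  linarith

lemma tendsto_natFloor_mul_div_natCast {r : ℝ} (hr : 0 ≤ r) :
    Tendsto (fun n : ℕ => (⌊r * n⌋₊ : ℝ) / n) atTop (𝓝 r) :=
  (tendsto_nat_floor_mul_div_atTop hr).comp tendsto_natCast_atTop_atTop

theorem tendsto_log_div_natCast_of_tendsto_div {x : ℕ → ℝ} {s : ℝ} (hx : ∀ n, 1 ≤ x n)
    (hxs : Tendsto (fun n : ℕ => x n / n) atTop (𝓝 s)) :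
    Tendsto (fun n : ℕ => log (x n) / n) atTop (𝓝 0) := by
  have hlog : Tendsto (fun n : ℕ => log n / n) atTop (𝓝 0) := by
    simpa [Function.comp_def] using (tendsto_pow_log_div_mul_add_atTop 1 0 1 one_ne_zero).comp
      tendsto_natCast_atTop_atTop
  have hupper : Tendsto (fun n : ℕ => log n / n + x n / n * (1 / n)) atTop (𝓝 0) := by
    simpa using hlog.add (hxs.mul tendsto_one_div_atTop_nhds_zero_nat)
  refine tendsto_of_tendsto_of_tendsto_of_le_of_le' tendsto_const_nhds hupper
    (Eventually.of_forall fun n => div_nonneg (log_nonneg (hx n)) n.cast_nonneg) ?_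
  filter_upwards [eventually_gt_atTop 0] with n hn
  have hn' : (0 : ℝ) < n := by exact_mod_cast hn
  -- `log x = log n + log (x / n)` and `log (x / n) ≤ x / n`
  have h : log (x n) ≤ log n + x n / n := by
    have := log_le_self (div_nonneg (zero_le_one.trans (hx n)) hn'.le)
    rw [log_div (by linarith [hx n]) hn'.ne'] at this
    linarith
  calc log (x n) / n ≤ (log n + x n / n) / n := div_le_div_of_nonneg_right h hn'.le
    _ = _ := by ring

theorem tendsto_log_choose_add_div {b c : ℕ → ℕ} {β γ : ℝ}
    (hb : Tendsto (fun n : ℕ => (b n : ℝ) / n) atTop (𝓝 β))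
    (hc : Tendsto (fun n : ℕ => (c n : ℝ) / n) atTop (𝓝 γ)) :
    Tendsto (fun n : ℕ => log ((b n + c n).choose (b n)) / n) atTop
      (𝓝 (negMulLog β + negMulLog γ - negMulLog (β + γ))) := by
  set P : ℕ → ℝ := fun n => negMulLog (b n) + negMulLog (c n) - negMulLog ((b n : ℝ) + c n)
  have hP : Tendsto (fun n => P n / n) atTop
      (𝓝 (negMulLog β + negMulLog γ - negMulLog (β + γ))) := by
    have h := ((continuous_negMulLog.tendsto β).comp hb).add
      ((continuous_negMulLog.tendsto γ).comp hc)
      |>.sub ((continuous_negMulLog.tendsto (β + γ)).comp (hb.add hc))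
    refine h.congr fun n => ?_
    -- `negMulLog` is homogeneous up to a term linear in its argument, which cancels here
    simp only [Function.comp_apply, P, div_eq_mul_inv, ← add_mul, negMulLog_mul]
    ring
  have herr : Tendsto (fun n : ℕ => log ((b n : ℝ) + c n + 1) / n) atTop (𝓝 0) := by
    refine tendsto_log_div_natCast_of_tendsto_div (s := β + γ)
      (fun n => le_add_of_nonneg_left (by positivity)) ?_
    simpa [add_div] using (hb.add hc).add tendsto_one_div_atTop_nhds_zero_nat
  refine tendsto_of_tendsto_of_tendsto_of_le_of_le (by simpa using hP.sub herr) hP (fun n => ?_)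
    (fun n => div_le_div_of_nonneg_right (log_choose_add_le _ _) n.cast_nonneg)
  rw [← sub_div]
  exact div_le_div_of_nonneg_right (sub_log_le_log_choose_add _ _) n.cast_nonneg

theorem tendsto_log_choose_floor_div {κ δ : ℝ} (hδ : 0 ≤ δ) (hδκ : δ ≤ κ) :
    Tendsto (fun n : ℕ => log (⌊κ * n⌋₊.choose ⌊δ * n⌋₊) / n) atTop
      (𝓝 (negMulLog δ + negMulLog (κ - δ) - negMulLog κ)) := by
  have hfloor (n : ℕ) : ⌊δ * n⌋₊ ≤ ⌊κ * n⌋₊ := Nat.floor_le_floor (by gcongr)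
  have hsub : Tendsto (fun n : ℕ => ((⌊κ * n⌋₊ - ⌊δ * n⌋₊ : ℕ) : ℝ) / n) atTop (𝓝 (κ - δ)) := by
    simpa [Nat.cast_sub (hfloor _), sub_div] using
      (tendsto_natFloor_mul_div_natCast (hδ.trans hδκ)).sub (tendsto_natFloor_mul_div_natCast hδ)
  simpa [Nat.add_sub_cancel' (hfloor _)] using
    tendsto_log_choose_add_div (tendsto_natFloor_mul_div_natCast hδ) hsub

theorem tendsto_log_sum_range_div {c : ℕ → ℝ} {l : ℝ} (hc : ∀ n, 0 < c n) (hl : 0 ≤ l)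
    (h : Tendsto (fun n : ℕ => log (c n) / n) atTop (𝓝 l)) :
    Tendsto (fun N : ℕ => log (∑ i ∈ Finset.range (N + 1), c i) / N) atTop (𝓝 l) := by
  have hsum_pos (N : ℕ) : 0 < ∑ i ∈ Finset.range (N + 1), c i :=
    Finset.sum_pos (fun i _ => hc i) Finset.nonempty_range_add_one
  rw [tendsto_order]
  refine ⟨fun x hx => ?_, fun x hx => ?_⟩
  · filter_upwards [h.eventually (lt_mem_nhds hx)] with N hN
    refine hN.trans_le (div_le_div_of_nonneg_right (log_le_log (hc N) ?_) N.cast_nonneg)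
    exact Finset.single_le_sum (fun i _ => (hc i).le) (Finset.self_mem_range_succ N)
  · obtain ⟨y, hly, hyx⟩ := exists_between hx
    have hy : 0 < y := hl.trans_lt hly
    obtain ⟨i₀, hi₀⟩ := eventually_atTop.1
      ((h.eventually (gt_mem_nhds hly)).and (eventually_gt_atTop 0))
    have hhead : ∀ᶠ N : ℕ in atTop, ∑ i ∈ Finset.range i₀, c i ≤ exp (y * N) :=
      (tendsto_exp_atTop.comp
        (tendsto_natCast_atTop_atTop.const_mul_atTop hy)).eventually_ge_atTop _
    have hbound : ∀ᶠ N : ℕ in atTop,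
        log (∑ i ∈ Finset.range (N + 1), c i) / N ≤ log ((N : ℝ) + 1) / N + y := by
      filter_upwards [hhead, eventually_gt_atTop 0] with N hN hN0
      have hterm : ∀ i ∈ Finset.range (N + 1), c i ≤ exp (y * N) := by
        intro i hi
        rcases lt_or_ge i i₀ with hii | hii
        · exact (Finset.single_le_sum (fun j _ => (hc j).le) (Finset.mem_range.2 hii)).trans hN
        · obtain ⟨hlt, hi0⟩ := hi₀ i hii
          have hi' : (0 : ℝ) < i := by exact_mod_cast hi0
          have hiN : (i : ℝ) ≤ N := by exact_mod_cast Finset.mem_range_succ_iff.1 hi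
          calc c i ≤ exp (y * i) := by
                rw [← log_le_iff_le_exp (hc i)]
                exact ((div_lt_iff₀ hi').1 hlt).le
            _ ≤ exp (y * N) := exp_le_exp.2 (by gcongr)
      have hsum : ∑ i ∈ Finset.range (N + 1), c i ≤ ((N : ℝ) + 1) * exp (y * N) := by
        simpa using Finset.sum_le_sum hterm
      have hN' : (0 : ℝ) < N := by exact_mod_cast hN0
      have hlog := log_le_log (hsum_pos N) hsum
      rw [log_mul (by positivity) (exp_pos _).ne', log_exp] at hlog
      calc _ ≤ (log ((N : ℝ) + 1) + y * N) / N := div_le_div_of_nonneg_right hlog hN'.le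
        _ = _ := by field_simp
    have hlim : Tendsto (fun N : ℕ => log ((N : ℝ) + 1) / N + y) atTop (𝓝 (0 + y)) := by
      refine (tendsto_log_div_natCast_of_tendsto_div (s := 1)
        (fun N => le_add_of_nonneg_left N.cast_nonneg) ?_).add tendsto_const_nhds
      simpa [add_comm] using tendsto_add_mul_div_add_mul_atTop_nhds (1 : ℝ) 0 1 one_ne_zero
    filter_upwards [hbound, hlim.eventually (gt_mem_nhds (by rwa [zero_add]))] with N h₁ h₂
    exact h₁.trans_lt h₂

theorem tendsto_log_sum_range_floor_div {c : ℕ → ℝ} {l ρ : ℝ} (hc : ∀ n, 0 < c n) (hl : 0 ≤ l)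
    (h : Tendsto (fun n : ℕ => log (c n) / n) atTop (𝓝 l)) (hρ : 0 ≤ ρ) :
    Tendsto (fun n : ℕ => log (∑ i ∈ Finset.range (n + ⌊ρ * n⌋₊ + 1), c i) / n) atTop
      (𝓝 ((1 + ρ) * l)) := by
  set N : ℕ → ℕ := fun n => n + ⌊ρ * n⌋₊
  have hN : Tendsto N atTop atTop := tendsto_atTop_mono (fun n => Nat.le_add_right n _) tendsto_id
  have hNdiv : Tendsto (fun n : ℕ => (N n : ℝ) / n) atTop (𝓝 (1 + ρ)) := by
    refine (tendsto_const_nhds.add (tendsto_natFloor_mul_div_natCast hρ)).congr' ?_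
    filter_upwards [eventually_ne_atTop 0] with n hn
    simp [N, add_div, div_self (Nat.cast_ne_zero.2 hn : (n : ℝ) ≠ 0)]
  refine (hNdiv.mul ((tendsto_log_sum_range_div hc hl h).comp hN)).congr' ?_
  filter_upwards [eventually_ne_atTop 0] with n hn
  have hNn : (N n : ℝ) ≠ 0 := Nat.cast_ne_zero.2 (by simp only [N]; omega)
  rw [Function.comp_apply, mul_comm, div_mul_div_cancel₀ hNn]

theorem tendsto_log_div_of_tendsto_rpow_one_div {c : ℕ → ℝ} {μ : ℝ} (hc : ∀ n, 0 < c n)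
    (hμ : 0 < μ) (h : Tendsto (fun n : ℕ => c n ^ ((1 : ℝ) / n)) atTop (𝓝 μ)) :
    Tendsto (fun n : ℕ => log (c n) / n) atTop (𝓝 (log μ)) := by
  refine ((continuousAt_log hμ.ne').tendsto.comp h).congr fun n => ?_
  rw [Function.comp_apply, log_rpow (hc n), one_div_mul_eq_div]

theorem limsup_rpow_one_div_le_exp {t u : ℕ → ℝ} {L : ℝ} (ht : ∀ n, 0 ≤ t n) (hu : ∀ n, 0 < u n)
    (htu : ∀ n, t n ≤ u n) (hL : Tendsto (fun n : ℕ => log (u n) / n) atTop (𝓝 L)) :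
    limsup (fun n : ℕ => t n ^ ((1 : ℝ) / n)) atTop ≤ exp L := by
  have hroot : Tendsto (fun n : ℕ => u n ^ ((1 : ℝ) / n)) atTop (𝓝 (exp L)) := by
    refine ((continuous_exp.tendsto L).comp hL).congr fun n => ?_
    rw [Function.comp_apply, rpow_def_of_pos (hu n), mul_one_div]
  calc limsup (fun n : ℕ => t n ^ ((1 : ℝ) / n)) atTop
      ≤ limsup (fun n : ℕ => u n ^ ((1 : ℝ) / n)) atTop :=
        limsup_le_limsup
          (Eventually.of_forall fun n => rpow_le_rpow (ht n) (htu n) (by positivity))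
          (isCoboundedUnder_le_of_le atTop fun n => rpow_nonneg (ht n) _) hroot.isBoundedUnder_le
    _ = exp L := hroot.limsup_eq

theorem stmt_6_general {α : Type*} (c : ℕ → ℝ) (μ : ℝ) (hμ : 1 < μ) (hc : ∀ n, 0 < c n)
    (hlim : Tendsto (fun n : ℕ => (c n) ^ ((1 : ℝ) / n)) atTop (𝓝 μ))
    (κ δ cc Z : ℝ) (hδ : 0 < δ) (hδκ : δ < κ) (hcc : 0 ≤ cc) (hZ : 1 ≤ Z)
    (T : ℕ → Finset α)
    (hbound : ∀ n : ℕ,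
      ((T n).card : ℝ) * (Nat.choose ⌊κ * n⌋₊ ⌊δ * n⌋₊ : ℝ) ≤
        (∑ i ∈ Finset.range (n + ⌊cc * δ * n⌋₊ + 1), c i) * Z ^ (δ * n)) :
    Filter.limsup (fun n : ℕ => ((T n).card : ℝ) ^ ((1 : ℝ) / n)) atTop ≤
      μ ^ (1 + cc * δ) * Z ^ δ * δ ^ δ * (κ - δ) ^ (κ - δ) / κ ^ κ := by
  have hμ₀ : 0 < μ := zero_lt_one.trans hμ
  have hZ₀ : 0 < Z := zero_lt_one.trans_le hZ
  have hsum_pos (n : ℕ) : 0 < ∑ i ∈ Finset.range (n + ⌊cc * δ * n⌋₊ + 1), c i :=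
    Finset.sum_pos (fun i _ => hc i) Finset.nonempty_range_add_one
  have hchoose_pos (n : ℕ) : (0 : ℝ) < Nat.choose ⌊κ * n⌋₊ ⌊δ * n⌋₊ := by
    exact_mod_cast Nat.choose_pos (Nat.floor_le_floor (by gcongr))
  have hlog : Tendsto (fun n : ℕ => log ((∑ i ∈ Finset.range (n + ⌊cc * δ * n⌋₊ + 1), c i) *
        Z ^ (δ * n) / Nat.choose ⌊κ * n⌋₊ ⌊δ * n⌋₊) / n) atTop
      (𝓝 ((1 + cc * δ) * log μ + δ * log Z - (negMulLog δ + negMulLog (κ - δ) - negMulLog κ))) := by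
    refine (((tendsto_log_sum_range_floor_div hc (log_nonneg hμ.le)
      (tendsto_log_div_of_tendsto_rpow_one_div hc hμ₀ hlim) (by positivity)).add
      tendsto_const_nhds).sub (tendsto_log_choose_floor_div hδ.le hδκ.le)).congr' ?_
    filter_upwards [eventually_ne_atTop 0] with n hn
    rw [log_div (mul_pos (hsum_pos n) (by positivity)).ne' (hchoose_pos n).ne',
      log_mul (hsum_pos n).ne' (by positivity), log_rpow hZ₀]
    field_simp
  refine (limsup_rpow_one_div_le_exp (fun n => Nat.cast_nonneg _)
    (fun n => div_pos (mul_pos (hsum_pos n) (by positivity)) (hchoose_pos n))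
    (fun n => (le_div_iff₀ (hchoose_pos n)).2 (hbound n)) hlog).trans_eq ?_
  rw [rpow_def_of_pos hμ₀, rpow_def_of_pos hZ₀, rpow_def_of_pos hδ,
    rpow_def_of_pos (sub_pos.2 hδκ), rpow_def_of_pos (hδ.trans hδκ), ← exp_add, ← exp_add,
    ← exp_add, ← exp_sub]
  congr 1
  simp only [negMulLog]
  ring

/-- Abstract counting comparison: if `c_n^{1/n} → μ` and for all `n`
`|T_n| · C(⌊κn⌋, ⌊δn⌋) ≤ (Σ_{i=0}^{n+⌊c·δn⌋} c_i) · Z^{δn}`, then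
`limsup |T_n|^{1/n} ≤ μ^{1+cδ} · Z^δ · δ^δ (κ-δ)^{κ-δ} / κ^κ`. -/
theorem stmt_6 {α : Type*} (c : ℕ → ℝ) (μ : ℝ) (hμ : 1 < μ) (hc : ∀ n, 0 < c n)
    (hlim : Tendsto (fun n : ℕ => (c n) ^ ((1 : ℝ) / n)) atTop (𝓝 μ))
    (ε : ℝ) (hε0 : 0 < ε) (hε1 : ε < 1) (m : ℕ) (hm : 1 ≤ m)
    (κ δ cc Z : ℝ) (hδ : 0 < δ) (hδκ : δ < κ) (hcc : 0 ≤ cc) (hZ : 1 ≤ Z)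
    (T : ℕ → Finset α)
    (hbound : ∀ n : ℕ,
      ((T n).card : ℝ) * (Nat.choose ⌊κ * n⌋₊ ⌊δ * n⌋₊ : ℝ) ≤
        (∑ i ∈ Finset.range (n + ⌊cc * δ * n⌋₊ + 1), c i) * Z ^ (δ * n)) :
    Filter.limsup (fun n : ℕ => ((T n).card : ℝ) ^ ((1 : ℝ) / n)) atTop ≤
      μ ^ (1 + cc * δ) * Z ^ δ * δ ^ δ * (κ - δ) ^ (κ - δ) / κ ^ κ :=
  stmt_6_general c μ hμ hc hlim κ δ cc Z hδ hδκ hcc hZ T hbound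
end

section
/- Let Γ be a group acting quasi-transitively on a connected locally finite graph G, i.e., the vertex set V has finitely many Γ-orbits. Let G₁ be a connected component of G \ ΓS for a finite vertex set S (where ΓS denotes the union of all images γS, γ ∈ Γ). Then the setwise stabilizer Γ₁ = {γ ∈ Γ : γ·V(G₁) = V(G₁)} acts quasi-transitively on G₁, i.e., V(G₁) has finitely many Γ₁-orbits. -/
open Pointwise

/-!
The components of `G \ ΓS` are permuted by `Γ`, because `ΓS` is `Γ`-invariant and `Γ` acts by
graph automorphisms; so the vertex set `V₁` of one component is a block of the action. For a
block `B` and a finite set `W` of orbit representatives, pick for each `w ∈ W` whose orbit meets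
`B` one translate `g_w • w ∈ B`. If `v = γ • w ∈ B`, then `γ * g_w⁻¹` maps a point of `B` into `B`,
hence stabilizes `B`, and it sends `g_w • w` to `v`.
-/

namespace MulAction.IsBlock

variable {Γ X : Type*} [Group Γ] [MulAction Γ X] {B : Set X}

theorem exists_finset_stabilizer_smul_eq (hB : IsBlock Γ B)
    (hW : ∃ W : Finset X, ∀ x : X, ∃ γ : Γ, ∃ w ∈ W, γ • w = x) :
    ∃ W₁ : Finset X, ↑W₁ ⊆ B ∧ ∀ x ∈ B, ∃ γ ∈ stabilizer Γ B, ∃ w ∈ W₁, γ • w = x := by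
  classical
  obtain ⟨W, hW⟩ := hW
  have hchoice : ∀ w : X, ∃ g : Γ, (∃ γ : Γ, γ • w ∈ B) → g • w ∈ B := fun w => by
    by_cases h : ∃ γ : Γ, γ • w ∈ B
    · exact h.imp fun _ hγ _ => hγ
    · exact ⟨1, fun h' => absurd h' h⟩
  choose g hg using hchoice
  refine ⟨(W.image fun w => g w • w).filter (· ∈ B), fun x hx => (Finset.mem_filter.1 hx).2, ?_⟩
  intro x hx
  obtain ⟨γ, w, hwW, rfl⟩ := hW x
  have hgw : g w • w ∈ B := hg w ⟨γ, hx⟩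
  have hmaps : (γ * (g w)⁻¹) • g w • w = γ • w := by rw [smul_smul, inv_mul_cancel_right]
  refine ⟨γ * (g w)⁻¹, ?_, g w • w, ?_, hmaps⟩
  · exact hB.smul_eq_of_mem hgw (hmaps ▸ hx)
  · exact Finset.mem_filter.2 ⟨Finset.mem_image_of_mem _ hwW, hgw⟩

end MulAction.IsBlock

namespace SimpleGraph

variable {V Γ : Type*} [Group Γ] [MulAction Γ V] {G : SimpleGraph V} {T : Set V}

theorem Reachable.induce_smul (hAdj : ∀ (γ : Γ) (u v : V), G.Adj (γ • u) (γ • v) ↔ G.Adj u v)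
    (hT : ∀ (γ : Γ) (x : V), γ • x ∈ T ↔ x ∈ T) (γ : Γ) {x y : T}
    (h : (G.induce T).Reachable x y) :
    (G.induce T).Reachable ⟨γ • x, (hT γ x).2 x.2⟩ ⟨γ • y, (hT γ y).2 y.2⟩ :=
  h.map (induceHom ⟨(γ • ·), (hAdj γ _ _).2⟩ fun v hv => (hT γ v).2 hv)

theorem ConnectedComponent.smul_image_val_supp_subset
    (hAdj : ∀ (γ : Γ) (u v : V), G.Adj (γ • u) (γ • v) ↔ G.Adj u v)
    (hT : ∀ (γ : Γ) (x : V), γ • x ∈ T ↔ x ∈ T) (c : (G.induce T).ConnectedComponent)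
    {γ : Γ} {a : V} (ha : a ∈ Subtype.val '' c.supp) (hγa : γ • a ∈ Subtype.val '' c.supp) :
    γ • (Subtype.val '' c.supp) ⊆ Subtype.val '' c.supp := by
  rintro _ ⟨_, ⟨v, hv, rfl⟩, rfl⟩
  obtain ⟨a, ha, rfl⟩ := ha
  obtain ⟨b, hb, hab⟩ := hγa
  have hreach : (G.induce T).Reachable v a :=
    ConnectedComponent.exact ((c.mem_supp_iff v).1 hv ▸ ((c.mem_supp_iff a).1 ha).symm)
  refine ⟨⟨γ • v, (hT γ v).2 v.2⟩, ?_, rfl⟩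
  have hb' : b = ⟨γ • a, (hT γ a).2 a.2⟩ := Subtype.ext hab
  rw [c.mem_supp_iff, ← (c.mem_supp_iff b).1 hb, hb']
  exact ConnectedComponent.sound (hreach.induce_smul hAdj hT γ)

theorem ConnectedComponent.isBlock_image_val_supp
    (hAdj : ∀ (γ : Γ) (u v : V), G.Adj (γ • u) (γ • v) ↔ G.Adj u v)
    (hT : ∀ (γ : Γ) (x : V), γ • x ∈ T ↔ x ∈ T) (c : (G.induce T).ConnectedComponent) :
    MulAction.IsBlock Γ (Subtype.val '' c.supp) := by
  refine MulAction.isBlock_iff_smul_eq_of_mem.2 fun γ a ha hγa => ?_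
  refine (c.smul_image_val_supp_subset hAdj hT ha hγa).antisymm ?_
  rw [Set.subset_smul_set_iff]
  exact c.smul_image_val_supp_subset hAdj hT hγa (by rwa [inv_smul_smul])

end SimpleGraph

theorem stmt_9_general {V : Type*} (G : SimpleGraph V) (Γ : Type*) [Group Γ] [MulAction Γ V]
    (hAdj : ∀ (γ : Γ) (u v : V), G.Adj (γ • u) (γ • v) ↔ G.Adj u v)
    (hqt : ∃ W : Finset V, ∀ v : V, ∃ γ : Γ, ∃ w ∈ W, γ • w = v)
    (S : Finset V)
    (ΓS : Set V) (hΓS : ΓS = {v : V | ∃ γ : Γ, ∃ s ∈ S, γ • (s : V) = v})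
    (c : (G.induce ΓSᶜ).ConnectedComponent)
    (V₁ : Set V) (hV₁ : V₁ = Subtype.val '' c.supp) :
    ∃ W₁ : Finset V, ↑W₁ ⊆ V₁ ∧
      ∀ v ∈ V₁, ∃ γ ∈ MulAction.stabilizer Γ V₁, ∃ w ∈ W₁, γ • (w : V) = v := by
  have hinv : ∀ (γ : Γ) (x : V), γ • x ∈ ΓSᶜ ↔ x ∈ ΓSᶜ := by
    subst hΓS
    refine fun γ x => not_congr ⟨fun ⟨δ, s, hs, h⟩ => ⟨γ⁻¹ * δ, s, hs, ?_⟩,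
      fun ⟨δ, s, hs, h⟩ => ⟨γ * δ, s, hs, by rw [mul_smul, h]⟩⟩
    rw [mul_smul, h, inv_smul_smul]
  subst hV₁
  exact (c.isBlock_image_val_supp hAdj hinv).exists_finset_stabilizer_smul_eq hqt

/-- If `Γ` acts quasi-transitively on a connected locally finite graph `G`
(by graph automorphisms) and `G₁` is a connected component of `G \ ΓS` for a finite
vertex set `S`, then the setwise stabilizer of `V(G₁)` in `Γ` acts quasi-transitively
on `G₁`. -/
theorem stmt_9 {V : Type*} (G : SimpleGraph V) (Γ : Type*) [Group Γ] [MulAction Γ V]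
    (hAdj : ∀ (γ : Γ) (u v : V), G.Adj (γ • u) (γ • v) ↔ G.Adj u v)
    (hconn : G.Connected) (hlf : G.LocallyFinite)
    (hqt : ∃ W : Finset V, ∀ v : V, ∃ γ : Γ, ∃ w ∈ W, γ • w = v)
    (S : Finset V)
    (ΓS : Set V) (hΓS : ΓS = {v : V | ∃ γ : Γ, ∃ s ∈ S, γ • (s : V) = v})
    (c : (G.induce ΓSᶜ).ConnectedComponent)
    (V₁ : Set V) (hV₁ : V₁ = Subtype.val '' c.supp) :
    ∃ W₁ : Finset V, ↑W₁ ⊆ V₁ ∧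
      ∀ v ∈ V₁, ∃ γ ∈ MulAction.stabilizer Γ V₁, ∃ w ∈ W₁, γ • (w : V) = v :=
  stmt_9_general G Γ hAdj hqt S ΓS hΓS c V₁ hV₁
end

section
/- Suppose a sequence of counts satisfies: for all n, b_n(ξn) ≤ Σ_{i=1}^{⌊ξn⌋} C(N, i) (μ(1-ε))^{Nm - im} (μ(1+ε))^{im} c_{n-Nm}, where N = ⌊n/m⌋, c_k ≤ D μ^k(1+ε)^k for a constant D, and ε ∈ (0,1), m ≥ 1 fixed. Then for all sufficiently small ξ > 0, limsup_{n→∞} b_n(ξn)^{1/n} < μ. -/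
/-!
Write `δ = 1 - ε`, `x = ((1 + ε) / δ) ^ m` and `N = ⌊n / m⌋`. Up to a constant, the `i`-th
summand is `(μ δ) ^ (N m) C(N, i) x ^ i`, and for every `s ≥ 1` Chernoff's trick bounds the
partial binomial sum over `i ≤ ξ n` by `s ^ (ξ n) (1 + x / s) ^ N`. Hence `b_n(ξ n) ≤ C Q ^ n`
with `Q = μ s ^ ξ δ (1 + x / s) ^ (1 / m)`. Taking `s` large makes `δ (1 + x / s) ^ (1 / m) < 1`,
and then taking `ξ` small keeps `s ^ ξ` close enough to `1` that `Q < μ`; the `n`-th roots of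
`C Q ^ n` tend to `Q`.
-/

open Filter Finset Topology

theorem sum_range_choose_mul_pow_le_add_pow {y : ℝ} (hy : 0 ≤ y) (N K : ℕ) :
    ∑ i ∈ range K, (N.choose i : ℝ) * y ^ i ≤ (1 + y) ^ N := by
  have htail : ∑ i ∈ range K, (N.choose (N + 1 + i) : ℝ) * y ^ (N + 1 + i) = 0 :=
    sum_eq_zero fun i _ => by rw [Nat.choose_eq_zero_of_lt (by omega), Nat.cast_zero, zero_mul]
  calc ∑ i ∈ range K, (N.choose i : ℝ) * y ^ i
      ≤ ∑ i ∈ range (N + 1 + K), (N.choose i : ℝ) * y ^ i :=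
        sum_le_sum_of_subset_of_nonneg (range_subset_range.2 (by omega))
          fun i _ _ => by positivity
    _ = (1 + y) ^ N := by
        rw [sum_range_add, htail, add_zero, add_comm 1 y, add_pow]
        exact sum_congr rfl fun i _ => by rw [one_pow, mul_one, mul_comm]

-- Chernoff's trick: each term with `i ≤ K` is only enlarged by the factor `s ^ (K - i) ≥ 1`.
theorem sum_range_choose_mul_pow_le_pow_mul_add_div_pow {x s : ℝ} (hx : 0 ≤ x) (hs : 1 ≤ s)
    (N K : ℕ) :
    ∑ i ∈ range (K + 1), (N.choose i : ℝ) * x ^ i ≤ s ^ K * (1 + x / s) ^ N := by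
  have hs0 : 0 < s := by linarith
  calc ∑ i ∈ range (K + 1), (N.choose i : ℝ) * x ^ i
      ≤ ∑ i ∈ range (K + 1), s ^ K * ((N.choose i : ℝ) * (x / s) ^ i) := by
        refine sum_le_sum fun i hi => ?_
        have hiK : i ≤ K := Nat.lt_succ_iff.1 (mem_range.1 hi)
        calc (N.choose i : ℝ) * x ^ i = s ^ i * ((N.choose i : ℝ) * (x / s) ^ i) := by
              rw [div_pow]; field_simp
          _ ≤ s ^ K * ((N.choose i : ℝ) * (x / s) ^ i) := by gcongr
    _ = s ^ K * ∑ i ∈ range (K + 1), (N.choose i : ℝ) * (x / s) ^ i := by rw [mul_sum]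
    _ ≤ s ^ K * (1 + x / s) ^ N := by
        gcongr
        exact sum_range_choose_mul_pow_le_add_pow (by positivity) N (K + 1)

theorem pow_div_le_rpow_one_div_pow {a : ℝ} (ha : 1 ≤ a) (n m : ℕ) :
    a ^ (n / m) ≤ (a ^ ((1 : ℝ) / m)) ^ n := by
  rw [← Real.rpow_natCast, ← Real.rpow_natCast, ← Real.rpow_mul (by linarith)]
  exact Real.rpow_le_rpow_of_exponent_le ha (Nat.cast_div_le.trans_eq (by ring))

theorem pow_div_mul_le_pow_div_pow {δ : ℝ} (h0 : 0 < δ) (h1 : δ ≤ 1) {m : ℕ} (hm : 0 < m)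
    (n : ℕ) : δ ^ (n / m * m) ≤ δ ^ n / δ ^ m := by
  rw [le_div_iff₀ (by positivity), ← pow_add]
  exact pow_le_pow_of_le_one h0.le h1 (Nat.lt_div_mul_add hm).le

theorem limsup_rpow_one_div_le_of_le_mul_pow {f : ℕ → ℝ} {C Q : ℝ} (hC : 0 < C) (hQ : 0 ≤ Q)
    (hf0 : ∀ n, 0 ≤ f n) (hf : ∀ n, f n ≤ C * Q ^ n) :
    limsup (fun n : ℕ => f n ^ ((1 : ℝ) / n)) atTop ≤ Q := by
  have hroot : Tendsto (fun n : ℕ => (C * Q ^ n) ^ ((1 : ℝ) / n)) atTop (𝓝 Q) := by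
    have hC_root : Tendsto (fun n : ℕ => C ^ ((1 : ℝ) / n)) atTop (𝓝 1) := by
      simpa [Function.comp_def] using ((Real.continuousAt_const_rpow hC.ne').tendsto.comp
        tendsto_one_div_atTop_nhds_zero_nat)
    refine (one_mul Q ▸ hC_root.mul_const Q).congr' ?_
    filter_upwards [eventually_ne_atTop 0] with n hn
    rw [Real.mul_rpow hC.le (by positivity), ← Real.rpow_natCast, ← Real.rpow_mul hQ,
      mul_one_div_cancel (by exact_mod_cast hn), Real.rpow_one]
  calc limsup (fun n : ℕ => f n ^ ((1 : ℝ) / n)) atTop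
      ≤ limsup (fun n : ℕ => (C * Q ^ n) ^ ((1 : ℝ) / n)) atTop :=
        limsup_le_limsup
          (Eventually.of_forall fun n => Real.rpow_le_rpow (hf0 n) (hf n) (by positivity))
          (isCoboundedUnder_le_of_le atTop fun n => Real.rpow_nonneg (hf0 n) _)
          hroot.isBoundedUnder_le
    _ = Q := hroot.limsup_eq

theorem exists_one_le_mul_one_add_div_rpow_lt_one {δ : ℝ} (hδ : δ < 1) (x p : ℝ) :
    ∃ s : ℝ, 1 ≤ s ∧ δ * (1 + x / s) ^ p < 1 := by
  have hlim : Tendsto (fun s : ℝ => δ * (1 + x / s) ^ p) atTop (𝓝 δ) := by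
    have hbase : Tendsto (fun s : ℝ => 1 + x / s) atTop (𝓝 1) := by
      have hdiv : Tendsto (x / ·) atTop (𝓝 0) := tendsto_const_nhds.div_atTop tendsto_id
      simpa using hdiv.const_add 1
    simpa using ((Real.continuousAt_rpow_const 1 p (Or.inl one_ne_zero)).tendsto.comp
      hbase).const_mul δ
  exact ((eventually_ge_atTop 1).and (hlim.eventually (gt_mem_nhds hδ))).exists

theorem exists_pos_rpow_mul_lt_one {γ : ℝ} (hγ : γ < 1) (s : ℝ) (hs : 0 < s) :
    ∃ ξ₀ : ℝ, 0 < ξ₀ ∧ s ^ ξ₀ * γ < 1 := by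
  have hlim : Tendsto (fun ξ : ℝ => s ^ ξ * γ) (𝓝[>] 0) (𝓝 γ) := by
    simpa using ((Real.continuousAt_const_rpow (b := 0) hs.ne').tendsto.mul_const γ).mono_left
      nhdsWithin_le_nhds
  exact (eventually_mem_nhdsWithin.and (hlim.eventually (gt_mem_nhds hγ))).exists

section PatternBound

variable {μ ε D : ℝ} {c : ℕ → ℝ} {m : ℕ}

theorem choose_mul_pow_mul_le (hμ : 1 ≤ μ) (hε0 : 0 ≤ ε) (hε1 : ε < 1) (hm : 0 < m)
    (hD : 0 ≤ D) (hc : ∀ k, c k ≤ D * (μ * (1 + ε)) ^ k) (n i : ℕ) :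
    ((n / m).choose i : ℝ) * (μ * (1 - ε)) ^ (n / m * m - i * m) * (μ * (1 + ε)) ^ (i * m) *
        c (n - n / m * m) ≤
      D * (μ * (1 + ε)) ^ m * (μ * (1 - ε)) ^ (n / m * m) *
        ((n / m).choose i * (((1 + ε) / (1 - ε)) ^ m) ^ i) := by
  set N := n / m
  rcases lt_or_ge N i with hNi | hiN
  · simp [Nat.choose_eq_zero_of_lt hNi]
  have hδ : 0 < 1 - ε := by linarith
  have hrem : n - N * m ≤ m := (Nat.mod_eq_sub_div_mul ▸ Nat.mod_lt n hm).le
  have hc_rem : c (n - N * m) ≤ D * (μ * (1 + ε)) ^ m :=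
    (hc _).trans (by gcongr; exact one_le_mul_of_one_le_of_one_le hμ (by linarith))
  have hsplit : (μ * (1 - ε)) ^ (N * m - i * m) * (μ * (1 + ε)) ^ (i * m) =
      (μ * (1 - ε)) ^ (N * m) * (((1 + ε) / (1 - ε)) ^ m) ^ i := by
    rw [pow_sub₀ _ (by positivity) (Nat.mul_le_mul_right m hiN), ← pow_mul, mul_comm m i,
      div_pow, mul_pow, mul_pow, mul_pow]
    field_simp
  calc ((N.choose i : ℝ) * (μ * (1 - ε)) ^ (N * m - i * m) * (μ * (1 + ε)) ^ (i * m) *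
        c (n - N * m))
      = N.choose i * ((μ * (1 - ε)) ^ (N * m - i * m) * (μ * (1 + ε)) ^ (i * m)) *
          c (n - N * m) := by ring
    _ ≤ N.choose i * ((μ * (1 - ε)) ^ (N * m - i * m) * (μ * (1 + ε)) ^ (i * m)) *
          (D * (μ * (1 + ε)) ^ m) := by gcongr
    _ = _ := by rw [hsplit]; ring

theorem sum_choose_mul_pow_mul_le_mul_pow (hμ : 1 ≤ μ) (hε0 : 0 ≤ ε) (hε1 : ε < 1) (hm : 0 < m)
    (hD : 0 ≤ D) (hc : ∀ k, c k ≤ D * (μ * (1 + ε)) ^ k) {ξ s : ℝ} (hξ : 0 ≤ ξ) (hs : 1 ≤ s)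
    (n : ℕ) :
    ∑ i ∈ Icc 1 ⌊ξ * n⌋₊, ((n / m).choose i : ℝ) * (μ * (1 - ε)) ^ (n / m * m - i * m) *
        (μ * (1 + ε)) ^ (i * m) * c (n - n / m * m) ≤
      D * (μ * (1 + ε)) ^ m / (1 - ε) ^ m *
        (μ * s ^ ξ * ((1 - ε) * (1 + ((1 + ε) / (1 - ε)) ^ m / s) ^ ((1 : ℝ) / m))) ^ n := by
  set x := ((1 + ε) / (1 - ε)) ^ m
  set N := n / m
  set K := ⌊ξ * n⌋₊
  have hδ : 0 < 1 - ε := by linarith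
  have hx : 0 ≤ x := by positivity
  have hbinom : ∑ i ∈ Icc 1 K, (N.choose i : ℝ) * x ^ i ≤ s ^ K * (1 + x / s) ^ N :=
    (sum_le_sum_of_subset_of_nonneg (fun i hi => by simp only [mem_Icc] at hi; simp; omega)
      fun i _ _ => by positivity).trans
      (sum_range_choose_mul_pow_le_pow_mul_add_div_pow hx hs N K)
  have hK : s ^ K ≤ (s ^ ξ) ^ n := by
    rw [← Real.rpow_natCast, ← Real.rpow_natCast, ← Real.rpow_mul (by linarith)]
    exact Real.rpow_le_rpow_of_exponent_le hs (Nat.floor_le (by positivity))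
  have hμN : μ ^ (N * m) ≤ μ ^ n := pow_le_pow_right₀ hμ (Nat.div_mul_le_self n m)
  have hδN : (1 - ε) ^ (N * m) ≤ (1 - ε) ^ n / (1 - ε) ^ m :=
    pow_div_mul_le_pow_div_pow hδ (by linarith) hm n
  have hN : (1 + x / s) ^ N ≤ ((1 + x / s) ^ ((1 : ℝ) / m)) ^ n :=
    pow_div_le_rpow_one_div_pow (le_add_of_nonneg_right (by positivity)) n m
  calc _ ≤ ∑ i ∈ Icc 1 K, D * (μ * (1 + ε)) ^ m * (μ * (1 - ε)) ^ (N * m) *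
          ((N.choose i : ℝ) * x ^ i) :=
        sum_le_sum fun i _ => choose_mul_pow_mul_le hμ hε0 hε1 hm hD hc n i
    _ = D * (μ * (1 + ε)) ^ m * (μ ^ (N * m) * (1 - ε) ^ (N * m)) *
          ∑ i ∈ Icc 1 K, (N.choose i : ℝ) * x ^ i := by rw [← mul_sum, mul_pow μ (1 - ε)]
    _ ≤ D * (μ * (1 + ε)) ^ m * (μ ^ n * ((1 - ε) ^ n / (1 - ε) ^ m)) *
          ((s ^ ξ) ^ n * ((1 + x / s) ^ ((1 : ℝ) / m)) ^ n) := by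
        gcongr
        exact hbinom.trans (by gcongr)
    _ = _ := by simp only [mul_pow]; ring

end PatternBound

/-- The quantitative core of the pattern-theorem argument. If
`b_n(ξn) ≤ Σ_{i=1}^{⌊ξn⌋} C(N,i) (μ(1-ε))^{Nm-im} (μ(1+ε))^{im} c_{n-Nm}` with
`N = ⌊n/m⌋` and `c_k ≤ D μ^k (1+ε)^k`, then for all sufficiently small `ξ > 0`,
`limsup b_n(ξn)^{1/n} < μ`. -/
theorem stmt_17 (μ ε : ℝ) (m : ℕ) (hμ : 1 < μ) (hε0 : 0 < ε) (hε1 : ε < 1) (hm : 1 ≤ m)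
    (b : ℝ → ℕ → ℝ) (c : ℕ → ℝ) (D : ℝ) (hD : 0 < D)
    (hbnonneg : ∀ ξ n, 0 ≤ b ξ n)
    (hc : ∀ k : ℕ, c k ≤ D * (μ * (1 + ε)) ^ k)
    (hb : ∀ ξ : ℝ, 0 < ξ → ∀ n : ℕ,
      b ξ n ≤ ∑ i ∈ Finset.Icc 1 ⌊ξ * n⌋₊,
        (Nat.choose (n / m) i : ℝ) * (μ * (1 - ε)) ^ ((n / m) * m - i * m) *
          (μ * (1 + ε)) ^ (i * m) * c (n - (n / m) * m)) :
    ∃ ξ₀ : ℝ, 0 < ξ₀ ∧ ∀ ξ : ℝ, 0 < ξ → ξ ≤ ξ₀ →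
      Filter.limsup (fun n : ℕ => (b ξ n) ^ ((1 : ℝ) / n)) atTop < μ := by
  set x := ((1 + ε) / (1 - ε)) ^ m
  obtain ⟨s, hs, hγ⟩ :=
    exists_one_le_mul_one_add_div_rpow_lt_one (show 1 - ε < 1 by linarith) x (1 / m)
  set γ := (1 - ε) * (1 + x / s) ^ ((1 : ℝ) / m)
  obtain ⟨ξ₀, hξ₀, hξ₀γ⟩ := exists_pos_rpow_mul_lt_one hγ s (by linarith)
  refine ⟨ξ₀, hξ₀, fun ξ hξ hξξ₀ => ?_⟩
  have hγ0 : 0 ≤ γ := mul_nonneg (by linarith) (Real.rpow_nonneg (by positivity) _)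
  have hsγ : s ^ ξ * γ < 1 := lt_of_le_of_lt (by gcongr) hξ₀γ
  have hQ : μ * s ^ ξ * γ < μ := by
    rw [mul_assoc]; exact mul_lt_of_lt_one_right (by linarith) hsγ
  have hbound : ∀ n, b ξ n ≤ D * (μ * (1 + ε)) ^ m / (1 - ε) ^ m * (μ * s ^ ξ * γ) ^ n :=
    fun n => (hb ξ hξ n).trans
      (sum_choose_mul_pow_mul_le_mul_pow hμ.le hε0.le hε1 hm hD.le hc hξ.le hs n)
  have hC : 0 < D * (μ * (1 + ε)) ^ m / (1 - ε) ^ m := by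
    have : 0 < 1 - ε := by linarith
    positivity
  exact (limsup_rpow_one_div_le_of_le_mul_pow hC (by positivity) (hbnonneg ξ) hbound).trans_lt hQ
end
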